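/- arXiv:1607.01197 — 2 statements merged into one kernel-verified Lean document; each statement's English description precedes it below -/
import Mathlib

section
/- Let L be a lattice in E with l(L) = m ≥ 1. Then every homothety class adjacent to [L] satisfies l ∈ {m − 1, m + 1}, and there is exactly one homothety class [L'] adjacent to [L] with l(L') = m − 1. -/
/-!
`F` is a nonarchimedean local field: a field complete with respect to a discrete valuation
(encoded by `Valued F ℤᵐ⁰` together with `CompleteSpace F` and the requirement that the
valuation ring is a discrete valuation ring) with finite residue field.
`E/F` is a quadratic field extension, with `O_E` the valuation ring of `E`, realized as the
integral closure of `O_F` in `E`.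
-/

open scoped Multiplicative Pointwise WithZero

noncomputable section

variable (F : Type*) [Field F] [Valued F ℤᵐ⁰] [CompleteSpace F]

/-- The valuation ring `O_F` of `F`. -/
noncomputable abbrev OF : ValuationSubring F := (Valued.v : Valuation F ℤᵐ⁰).valuationSubring

variable (E : Type*) [Field E] [Algebra F E]

/-- A lattice in `E`: a finitely generated `O_F`-submodule of `E` containing an `F`-basis of
`E` (equivalently, spanning `E` as an `F`-vector space). -/
def IsLattice (L : Submodule (OF F) E) : Prop :=
  L.FG ∧ Submodule.span F (L : Set E) = ⊤

/-- The multiplier ring `O_L = {x ∈ E | x·L ⊆ L}` of an `O_F`-submodule `L` of `E`. -/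
def mult (L : Submodule (OF F) E) : Set E := {x : E | ∀ y ∈ L, x * y ∈ L}

/-- The order `O_F + π^m·O_E` of `E`, where `O_E` is the valuation ring (= integral closure
of `O_F`) of `E` and `π` is a uniformizer of `F`. -/
def ordSet (π : OF F) (m : ℕ) : Set E :=
  {x : E | ∃ a : OF F, ∃ b : integralClosure (OF F) E,
    x = algebraMap (OF F) E a + (algebraMap F E (π : F)) ^ m * (b : E)}

/-- Two `O_F`-submodules of `E` are homothetic if they differ by scaling by an element
of `F^*`. -/
def Homothetic (L L' : Submodule (OF F) E) : Prop :=
  ∃ c : F, c ≠ 0 ∧ (L' : Set E) = c • (L : Set E)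

/-- The homothety classes of two lattices `L`, `L'` are adjacent (as vertices of the
Bruhat–Tits tree) if they are distinct and admit representatives `M`, `M'` with
`π·M ⊊ M' ⊊ M`. -/
def Adjacent (π : OF F) (L L' : Submodule (OF F) E) : Prop :=
  ¬ Homothetic F E L L' ∧
    ∃ M M' : Submodule (OF F) E, Homothetic F E L M ∧ Homothetic F E L' M' ∧
      (algebraMap F E (π : F)) • (M : Set E) ⊂ (M' : Set E) ∧ (M' : Set E) ⊂ (M : Set E)

/-!
Write `O_j = O_F + π^j O_E` and `m = k + 1`. Since `π^m O_E ⊆ O_L`, the ring `O_E` is a finitely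
generated, hence free, `O_F`-module of rank two; as `π⁻¹ ∉ O_E`, it has a basis `1, ω`. Then
`O_j = O_F + O_F π^j ω`, and `π^i ω ∈ O_j ↔ j ≤ i`, so the orders `O_j` are pairwise distinct.

Pick `v ∈ L` with `π^k ω v ∉ L`. Multiplying by `π^k ω` shows that `v` and `w = π^m ω v` are
independent modulo `π L`, so `L = O_F v + O_F w = v O_m`. Representatives of the classes adjacent
to `[L]` are the `N` with `π L ⊊ N ⊊ L`; as `π O_L ⊆ O_N` and `π O_N ⊆ O_L`, their conductors lie
in `[m - 1, m + 1]`. If `π^m ω ∈ O_N`, the first coordinate of every element of `N` is divisible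
by `π`, which forces `N = O_F π v + O_F w = π v O_{m-1}`. So this is the only neighbour with
conductor `m - 1`, and no neighbour has conductor `m`.
-/

theorem Irreducible.isUnit_or_dvd {R : Type*} [CommRing R] [IsDomain R]
    [IsDiscreteValuationRing R] {π : R} (hπ : Irreducible π) (a : R) : IsUnit a ∨ π ∣ a := by
  rw [← Ideal.mem_span_singleton, ← hπ.maximalIdeal_eq, IsLocalRing.mem_maximalIdeal,
    mem_nonunits_iff]
  exact em _

theorem ValuationSubring.exists_pow_mul_mem {K : Type*} [Field K] {A : ValuationSubring K}
    [IsDiscreteValuationRing A] {π : A} (hπ : Irreducible π) (x : K) :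
    ∃ n : ℕ, (π : K) ^ n * x ∈ A := by
  rcases A.mem_or_inv_mem x with hx | hx
  · exact ⟨0, by simpa using hx⟩
  rcases eq_or_ne x 0 with rfl | hx0
  · exact ⟨0, by simp⟩
  obtain ⟨n, μ, hμ⟩ := IsDiscreteValuationRing.associated_pow_irreducible
    (x := (⟨x⁻¹, hx⟩ : A)) (fun h => hx0 (inv_eq_zero.1 (congrArg Subtype.val h))) hπ
  refine ⟨n, ?_⟩
  have : (π : K) ^ n * x = μ := by
    rw [← SubmonoidClass.coe_pow, ← hμ, MulMemClass.coe_mul, mul_right_comm]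
    exact congrArg (· * _) (inv_mul_cancel₀ hx0) |>.trans (one_mul _)
  exact this ▸ (μ : A).2

theorem Submodule.algebraMap_mul_mem {R A : Type*} [CommSemiring R] [Semiring A] [Algebra R A]
    (N : Submodule R A) (r : R) {x : A} (hx : x ∈ N) : algebraMap R A r * x ∈ N := by
  simpa only [Algebra.smul_def] using N.smul_mem r hx

theorem Submodule.algebraMap_mul_mem_iff {R A : Type*} [CommRing R] [Ring A] [Algebra R A]
    (N : Submodule R A) {r : R} (hr : IsUnit r) {x : A} : algebraMap R A r * x ∈ N ↔ x ∈ N := by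
  rw [← Algebra.smul_def, N.smul_mem_iff_of_isUnit hr]

theorem Submodule.FG.of_forall_mul_mem {R K : Type*} [CommRing R] [IsNoetherianRing R] [Field K]
    [Algebra R K] {M N : Submodule R K} (hN : N.FG) {c : K} (hc : c ≠ 0)
    (h : ∀ x ∈ M, c * x ∈ N) : M.FG :=
  (hN.map (LinearMap.mulLeft R c⁻¹)).of_le fun x hx => ⟨c * x, h x hx, by simp [hc]⟩

theorem Set.smul_set_ssubset_smul_set_iff₀ {α β : Type*} [GroupWithZero α] [MulAction α β] {a : α}
    (ha : a ≠ 0) {A B : Set β} : a • A ⊂ a • B ↔ A ⊂ B := by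
  simp only [ssubset_iff_subset_not_subset, Set.smul_set_subset_smul_set_iff₀ ha]

theorem algebraMap_smul_set {K A : Type*} [CommSemiring K] [Semiring A] [Algebra K A] (c : K)
    (S : Set A) : algebraMap K A c • S = c • S := by
  ext; simp [Set.mem_smul_set, Algebra.smul_def]

structure IsIntegralBasis (e₀ e₁ : E) : Prop where
  mem_integralClosure_iff : ∀ x : E, x ∈ integralClosure (OF F) E ↔
    ∃ a b : OF F, x = algebraMap (OF F) E a * e₀ + algebraMap (OF F) E b * e₁
  exists_eq : ∀ x : E, ∃ s t : F, x = algebraMap F E s * e₀ + algebraMap F E t * e₁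
  eq_zero : ∀ s t : F, algebraMap F E s * e₀ + algebraMap F E t * e₁ = 0 → s = 0 ∧ t = 0

section

variable {F E}
omit [CompleteSpace F]
variable {π : OF F}

open Submodule

theorem OF.algebraMap_coe (a : OF F) : algebraMap F E a = algebraMap (OF F) E a :=
  (IsScalarTower.algebraMap_apply (OF F) F E a).symm

theorem OF.algebraMap_ne_zero (hπ : π ≠ 0) : algebraMap (OF F) E π ≠ 0 := by
  rw [← OF.algebraMap_coe]; simpa using hπ

theorem mult_eq_of_homothetic {L L' : Submodule (OF F) E} (h : Homothetic F E L L') :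
    mult F E L' = mult F E L := by
  obtain ⟨c, hc, hL'⟩ := h
  ext x
  show (∀ y ∈ (L' : Set E), x * y ∈ (L' : Set E)) ↔ ∀ y ∈ (L : Set E), x * y ∈ (L : Set E)
  rw [hL']
  constructor
  · intro h y hy
    simpa only [mul_smul_comm, Set.smul_mem_smul_set_iff₀ hc] using
      h (c • y) (Set.smul_mem_smul_set hy)
  · rintro h _ ⟨y, hy, rfl⟩
    rw [mul_smul_comm]
    exact Set.smul_mem_smul_set (h y hy)

theorem pow_mul_mem_ordSet {y : E} (hy : y ∈ integralClosure (OF F) E) {i j : ℕ} (hji : j ≤ i) :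
    algebraMap (OF F) E π ^ i * y ∈ ordSet F E π j := by
  refine ⟨0, ⟨algebraMap (OF F) E π ^ (i - j) * y, mul_mem (pow_mem (algebraMap_mem _ _) _) hy⟩, ?_⟩
  rw [OF.algebraMap_coe, map_zero, zero_add, ← mul_assoc, ← pow_add, Nat.add_sub_cancel' hji]

theorem one_mem_ordSet (j : ℕ) : (1 : E) ∈ ordSet F E π j :=
  ⟨1, 0, by simp⟩

theorem mul_mem_ordSet {j : ℕ} {x y : E} (hx : x ∈ ordSet F E π j) (hy : y ∈ ordSet F E π j) :
    x * y ∈ ordSet F E π j := by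
  obtain ⟨a, b, rfl⟩ := hx
  obtain ⟨a', b', rfl⟩ := hy
  have hp : algebraMap F E π ∈ integralClosure (OF F) E := by
    rw [OF.algebraMap_coe]; exact algebraMap_mem _ _
  refine ⟨a * a', ⟨algebraMap (OF F) E a * b' + algebraMap (OF F) E a' * b +
    algebraMap F E π ^ j * b * b', ?_⟩, ?_⟩
  · exact add_mem (add_mem (mul_mem (algebraMap_mem _ _) b'.2) (mul_mem (algebraMap_mem _ _) b.2))
      (mul_mem (mul_mem (pow_mem hp _) b.2) b'.2)
  · simp only [map_mul]; ring

theorem inv_algebraMap_notMem_integralClosure [IsDiscreteValuationRing (OF F)]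
    (hπ : Irreducible π) : (algebraMap (OF F) E π)⁻¹ ∉ integralClosure (OF F) E := by
  intro h
  rw [← OF.algebraMap_coe, ← map_inv₀, mem_integralClosure_iff,
    isIntegral_algebraMap_iff (algebraMap F E).injective] at h
  obtain ⟨y, hy⟩ := IsIntegrallyClosed.isIntegral_iff.1 h
  refine hπ.not_isUnit (IsUnit.of_mul_eq_one (a := π) y (Subtype.ext ?_))
  have hπ0 : (π : F) ≠ 0 := by exact_mod_cast hπ.ne_zero
  simpa [hπ0] using congrArg ((π : F) * ·) hy

theorem span_integralClosure_eq_top [Algebra.IsAlgebraic F E] :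
    span F (integralClosure (OF F) E : Set E) = ⊤ := by
  refine eq_top_iff.2 fun x _ => ?_
  have hx : IsAlgebraic (OF F) x :=
    (IsFractionRing.isAlgebraic_iff (OF F) F E).2 (Algebra.IsAlgebraic.isAlgebraic x)
  obtain ⟨y, hy0, hint⟩ := hx.exists_integral_multiple
  have hy0' : (y : F) ≠ 0 := by exact_mod_cast hy0
  have : x = (y : F)⁻¹ • (y • x) := by
    rw [← algebraMap_smul F y x, smul_smul]; simp [hy0']
  rw [this]
  exact smul_mem _ _ (subset_span hint)

theorem fg_integralClosure_of_mult_eq [IsDiscreteValuationRing (OF F)] (hπ : π ≠ 0)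
    {L : Submodule (OF F) E} (hL : IsLattice F E L) {j : ℕ} (hLj : mult F E L = ordSet F E π j) :
    (integralClosure (OF F) E).toSubmodule.FG := by
  obtain ⟨y, hy, hy0⟩ : ∃ y ∈ L, y ≠ 0 :=
    L.ne_bot_iff.1 fun h => by simpa [h] using hL.2
  refine hL.1.of_forall_mul_mem (mul_ne_zero (pow_ne_zero j (OF.algebraMap_ne_zero hπ)) hy0)
    fun x hx => ?_
  rw [mul_right_comm]
  exact (hLj ▸ pow_mul_mem_ordSet hx le_rfl : _ ∈ mult F E L) y hy

theorem IsIntegralBasis.swap {e₀ e₁ : E} (h : IsIntegralBasis F E e₀ e₁) :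
    IsIntegralBasis F E e₁ e₀ where
  mem_integralClosure_iff x := by
    simp only [h.mem_integralClosure_iff, add_comm (algebraMap (OF F) E _ * e₀)]
    exact exists_comm
  exists_eq x := by
    obtain ⟨s, t, hx⟩ := h.exists_eq x
    exact ⟨t, s, by rw [hx, add_comm]⟩
  eq_zero s t hst := (h.eq_zero t s (by rwa [add_comm])).symm

theorem IsIntegralBasis.one_left {e₀ e₁ : E} (h : IsIntegralBasis F E e₀ e₁) {α β : OF F}
    (h1 : 1 = algebraMap (OF F) E α * e₀ + algebraMap (OF F) E β * e₁) (hα : IsUnit α) :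
    IsIntegralBasis F E 1 e₁ := by
  obtain ⟨γ, hγ⟩ := hα.exists_left_inv
  have hγ' : algebraMap (OF F) E γ * algebraMap (OF F) E α = 1 := by rw [← map_mul, hγ, map_one]
  have he₀ : e₀ = algebraMap (OF F) E γ * (1 - algebraMap (OF F) E β * e₁) := by
    rw [h1]; linear_combination (-e₀) * hγ'
  have hα0 : (α : F) ≠ 0 := by exact_mod_cast hα.ne_zero
  refine ⟨fun x => ?_, fun x => ?_, fun s t hst => ?_⟩
  · rw [h.mem_integralClosure_iff]
    constructor
    · rintro ⟨a, b, rfl⟩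
      exact ⟨a * γ, b - a * γ * β, by rw [he₀]; simp only [map_mul, map_sub]; ring⟩
    · rintro ⟨a, b, rfl⟩
      exact ⟨a * α, a * β + b, by rw [h1]; simp only [map_mul, map_add]; ring⟩
  · obtain ⟨s, t, rfl⟩ := h.exists_eq x
    refine ⟨s * γ, t - s * γ * β, ?_⟩
    rw [he₀]; simp only [map_mul, map_sub, OF.algebraMap_coe]; ring
  · obtain ⟨hsα, hst'⟩ := h.eq_zero (s * α) (s * β + t) (by
      rw [map_mul, map_add, map_mul, OF.algebraMap_coe, OF.algebraMap_coe]
      linear_combination hst - algebraMap F E s * h1)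
    obtain rfl : s = 0 := (mul_eq_zero.1 hsα).resolve_right hα0
    simpa using hst'

theorem exists_isIntegralBasis [IsDiscreteValuationRing (OF F)] (hquad : Module.finrank F E = 2)
    (hfg : (integralClosure (OF F) E).toSubmodule.FG) : ∃ e₀ e₁ : E, IsIntegralBasis F E e₀ e₁ := by
  have : Module.Finite F E := Module.finite_of_finrank_eq_succ hquad
  have : Submodule.IsLattice F (integralClosure (OF F) E).toSubmodule :=
    ⟨hfg, span_integralClosure_eq_top⟩
  let b := Module.finBasisOfFinrankEq (OF F) _ <| Module.finrank_eq_of_rank_eq <|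
    (Submodule.IsLattice.rank' F (integralClosure (OF F) E).toSubmodule).trans
      (by rw [← Module.finrank_eq_rank, hquad])
  let B := b.extendOfIsLattice F
  refine ⟨b 0, b 1, fun x => ⟨fun hx => ?_, ?_⟩, fun x => ?_, fun s t hst => ?_⟩
  · refine ⟨b.repr ⟨x, hx⟩ 0, b.repr ⟨x, hx⟩ 1, ?_⟩
    have h := congrArg Subtype.val (b.sum_repr ⟨x, hx⟩)
    rw [Fin.sum_univ_two] at h
    simpa only [coe_add, coe_smul, Algebra.smul_def] using h.symm
  · rintro ⟨a, a', rfl⟩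
    exact add_mem (mul_mem (algebraMap_mem _ a) (b 0).2) (mul_mem (algebraMap_mem _ a') (b 1).2)
  · refine ⟨B.repr x 0, B.repr x 1, ?_⟩
    simpa [Fin.sum_univ_two, Algebra.smul_def, B] using (B.sum_repr x).symm
  · have := Fintype.linearIndependent_iff.1 B.linearIndependent ![s, t]
      (by simpa [Fin.sum_univ_two, Algebra.smul_def, B] using hst)
    exact ⟨this 0, this 1⟩

theorem exists_isIntegralBasis_one [IsDiscreteValuationRing (OF F)] (hπ : Irreducible π)
    (hquad : Module.finrank F E = 2) (hfg : (integralClosure (OF F) E).toSubmodule.FG) :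
    ∃ ω : E, IsIntegralBasis F E 1 ω := by
  obtain ⟨e₀, e₁, h⟩ := exists_isIntegralBasis hquad hfg
  obtain ⟨α, β, h1⟩ := (h.mem_integralClosure_iff 1).1 (one_mem _)
  rcases hπ.isUnit_or_dvd α with hα | ⟨α, rfl⟩
  · exact ⟨e₁, h.one_left h1 hα⟩
  rcases hπ.isUnit_or_dvd β with hβ | ⟨β, rfl⟩
  · exact ⟨e₀, h.swap.one_left (by rw [h1, add_comm]) hβ⟩
  -- otherwise `1 ∈ π O_E`, i.e. `π⁻¹ ∈ O_E`
  refine absurd ((h.mem_integralClosure_iff _).2 ⟨α, β, inv_eq_of_mul_eq_one_right ?_⟩)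
    (inv_algebraMap_notMem_integralClosure hπ)
  simp only [map_mul] at h1
  linear_combination -h1

theorem IsIntegralBasis.mem_integralClosure {ω : E} (hω : IsIntegralBasis F E 1 ω) :
    ω ∈ integralClosure (OF F) E :=
  (hω.mem_integralClosure_iff ω).2 ⟨0, 1, by simp⟩

theorem IsIntegralBasis.mem_ordSet_iff {ω : E} (hω : IsIntegralBasis F E 1 ω) {j : ℕ} {x : E} :
    x ∈ ordSet F E π j ↔ ∃ a b : OF F,
      x = algebraMap (OF F) E a + algebraMap (OF F) E b * (algebraMap (OF F) E π ^ j * ω) := by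
  constructor
  · rintro ⟨a, ⟨y, hy⟩, rfl⟩
    obtain ⟨c, d, rfl⟩ := (hω.mem_integralClosure_iff y).1 hy
    exact ⟨a + π ^ j * c, d, by simp only [OF.algebraMap_coe, map_add, map_mul, map_pow]; ring⟩
  · rintro ⟨a, b, rfl⟩
    refine ⟨a, ⟨algebraMap (OF F) E b * ω, mul_mem (algebraMap_mem _ _) hω.mem_integralClosure⟩, ?_⟩
    simp only [OF.algebraMap_coe]; ring

theorem IsIntegralBasis.pow_mul_mem_ordSet_iff {ω : E} (hω : IsIntegralBasis F E 1 ω)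
    (hπ : Irreducible π) {i j : ℕ} : algebraMap (OF F) E π ^ i * ω ∈ ordSet F E π j ↔ j ≤ i := by
  refine ⟨fun h => ?_, pow_mul_mem_ordSet hω.mem_integralClosure⟩
  obtain ⟨a, b, h⟩ := hω.mem_ordSet_iff.1 h
  have := (hω.eq_zero a (b * π ^ j - π ^ i) (by
    simp only [OF.algebraMap_coe, map_sub, map_mul, map_pow]; linear_combination -h)).2
  have hdvd : π ^ j ∣ π ^ i := ⟨b, by rw [mul_comm]; exact_mod_cast (sub_eq_zero.1 this).symm⟩
  exact (pow_dvd_pow_iff hπ.ne_zero hπ.not_isUnit).1 hdvd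

theorem IsIntegralBasis.ordSet_injective {ω : E} (hω : IsIntegralBasis F E 1 ω)
    (hπ : Irreducible π) : Function.Injective (ordSet F E π) := fun _ _ h =>
  le_antisymm ((hω.pow_mul_mem_ordSet_iff hπ).1 (h ▸ (hω.pow_mul_mem_ordSet_iff hπ).2 le_rfl))
    ((hω.pow_mul_mem_ordSet_iff hπ).1 (h ▸ (hω.pow_mul_mem_ordSet_iff hπ).2 le_rfl))

theorem IsIntegralBasis.mem_span_pair_iff {ω : E} (hω : IsIntegralBasis F E 1 ω) {j : ℕ}
    {c x : E} :
    x ∈ span (OF F) {c, c * (algebraMap (OF F) E π ^ j * ω)} ↔ ∃ y ∈ ordSet F E π j, x = c * y := by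
  simp only [mem_span_pair, hω.mem_ordSet_iff, Algebra.smul_def]
  constructor
  · rintro ⟨a, b, rfl⟩
    exact ⟨_, ⟨a, b, rfl⟩, by ring⟩
  · rintro ⟨_, ⟨a, b, rfl⟩, rfl⟩
    exact ⟨a, b, by ring⟩

theorem IsIntegralBasis.mult_span_pair {ω : E} (hω : IsIntegralBasis F E 1 ω) {j : ℕ} {c : E}
    (hc : c ≠ 0) :
    mult F E (span (OF F) {c, c * (algebraMap (OF F) E π ^ j * ω)}) = ordSet F E π j := by
  ext x
  simp only [mult, Set.mem_ofPred_eq, hω.mem_span_pair_iff]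
  constructor
  · intro h
    obtain ⟨y, hy, hxy⟩ := h c ⟨1, one_mem_ordSet j, (mul_one c).symm⟩
    rwa [mul_left_cancel₀ hc ((mul_comm c x).trans hxy)]
  · rintro hx _ ⟨y, hy, rfl⟩
    exact ⟨x * y, mul_mem_ordSet hx hy, by ring⟩

theorem IsLattice.of_mul_mem {L N : Submodule (OF F) E} (hL : IsLattice F E L) (hN : N.FG)
    {c : E} (hc : c ≠ 0) (h : ∀ x ∈ L, c * x ∈ N) : IsLattice F E N := by
  refine ⟨hN, eq_top_iff.2 fun x _ => ?_⟩
  have hx : c⁻¹ * x ∈ span F (L : Set E) := hL.2 ▸ mem_top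
  have := mem_map_of_mem (f := LinearMap.mulLeft F c) hx
  rw [map_span] at this
  simpa [hc] using span_mono (Set.image_subset_iff.2 h) this

theorem dvd_of_smul_add_smul_eq [IsDiscreteValuationRing (OF F)] (hπ : Irreducible π)
    {L : Submodule (OF F) E} {u v z : E} (hpu : algebraMap (OF F) E π * u ∈ mult F E L)
    (hpu2 : algebraMap (OF F) E π * u ^ 2 ∈ mult F E L) (hv : v ∈ L) (huv : u * v ∉ L)
    (hz : z ∈ L) {a b : OF F} (h : a • v + b • (v * (algebraMap (OF F) E π * u)) = π • z) :
    π ∣ a ∧ π ∣ b := by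
  set p := algebraMap (OF F) E π
  simp only [Algebra.smul_def] at h
  have ha : π ∣ a := by
    refine (hπ.isUnit_or_dvd a).resolve_left fun ha => huv ?_
    rw [← L.algebraMap_mul_mem_iff ha]
    have : algebraMap (OF F) E a * (u * v) =
        p * u * z - algebraMap (OF F) E b * (p * u ^ 2 * v) := by
      linear_combination u * h
    rw [this]
    exact L.sub_mem (hpu z hz) (L.algebraMap_mul_mem b (hpu2 v hv))
  obtain ⟨a, rfl⟩ := ha
  refine ⟨dvd_mul_right π a, (hπ.isUnit_or_dvd b).resolve_left fun hb => huv ?_⟩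
  rw [← L.algebraMap_mul_mem_iff hb]
  have : algebraMap (OF F) E b * (u * v) = z - algebraMap (OF F) E a * v :=
    mul_left_cancel₀ (OF.algebraMap_ne_zero hπ.ne_zero) (by rw [map_mul] at h; linear_combination h)
  rw [this]
  exact L.sub_mem hz (L.algebraMap_mul_mem a hv)

theorem mem_OF_of_smul_add_smul_mem [IsDiscreteValuationRing (OF F)] (hπ : Irreducible π)
    {L : Submodule (OF F) E} {v w : E}
    (hvw : ∀ a b : OF F, ∀ z ∈ L, a • v + b • w = π • z → π ∣ a ∧ π ∣ b)
    {s t : F} (h : s • v + t • w ∈ L) : s ∈ OF F ∧ t ∈ OF F := by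
  suffices key : ∀ n : ℕ, ∀ s t : F, (π : F) ^ n * s ∈ OF F → (π : F) ^ n * t ∈ OF F →
      s • v + t • w ∈ L → s ∈ OF F ∧ t ∈ OF F by
    obtain ⟨n, hn⟩ := (OF F).exists_pow_mul_mem hπ s
    obtain ⟨n', hn'⟩ := (OF F).exists_pow_mul_mem hπ t
    refine key (n + n') s t ?_ ?_ h
    · rw [pow_add, mul_right_comm]; exact mul_mem hn (pow_mem π.2 _)
    · rw [pow_add, mul_assoc]; exact mul_mem (pow_mem π.2 _) hn'
  intro n
  induction n with
  | zero => simp only [pow_zero, one_mul]; exact fun _ _ hs ht _ => ⟨hs, ht⟩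
  | succ n ih =>
    intro s t hs ht h
    have hπs : (π * s : F) • v + (π * t : F) • w = π • (s • v + t • w) := by
      rw [mul_smul, mul_smul, ← smul_add]; rfl
    obtain ⟨hs', ht'⟩ := ih (π * s) (π * t) (by rwa [← mul_assoc, ← pow_succ])
      (by rwa [← mul_assoc, ← pow_succ]) (hπs ▸ L.smul_mem π h)
    obtain ⟨⟨a, ha⟩, ⟨b, hb⟩⟩ := hvw ⟨_, hs'⟩ ⟨_, ht'⟩ _ h hπs
    have hπ0 : (π : F) ≠ 0 := by exact_mod_cast hπ.ne_zero
    refine ⟨?_, ?_⟩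
    · rw [mul_left_cancel₀ hπ0 (congrArg Subtype.val ha)]; exact a.2
    · rw [mul_left_cancel₀ hπ0 (congrArg Subtype.val hb)]; exact b.2

theorem eq_span_pair_of_mul_notMem [IsDiscreteValuationRing (OF F)] (hπ : Irreducible π)
    {L : Submodule (OF F) E} {u v : E} (hpu : algebraMap (OF F) E π * u ∈ mult F E L)
    (hpu2 : algebraMap (OF F) E π * u ^ 2 ∈ mult F E L)
    (hu : ∀ x : E, ∃ s t : F, x = algebraMap F E s + algebraMap F E t * u)
    (hv : v ∈ L) (huv : u * v ∉ L) :
    L = span (OF F) {v, v * (algebraMap (OF F) E π * u)} := by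
  have hv0 : v ≠ 0 := by rintro rfl; exact huv (by simp)
  have hp := OF.algebraMap_ne_zero (E := E) hπ.ne_zero
  refine le_antisymm (fun x hxL => ?_) (span_le.2 (Set.insert_subset_iff.2
    ⟨hv, Set.singleton_subset_iff.2 (mul_comm v _ ▸ hpu v hv)⟩))
  obtain ⟨s, t, hst⟩ := hu (x / v)
  have hx : x = s • v + (t / π) • (v * (algebraMap (OF F) E π * u)) := by
    rw [← div_mul_cancel₀ x hv0, hst, Algebra.smul_def, Algebra.smul_def, map_div₀,
      OF.algebraMap_coe]
    field_simp
  obtain ⟨hs, ht⟩ := mem_OF_of_smul_add_smul_mem hπ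
    (fun a b z hz h => dvd_of_smul_add_smul_eq hπ hpu hpu2 hv huv hz h) (hx ▸ hxL)
  exact mem_span_pair.2 ⟨⟨s, hs⟩, ⟨t / π, ht⟩, hx.symm⟩

theorem IsIntegralBasis.exists_eq_span_pair [IsDiscreteValuationRing (OF F)] {ω : E}
    (hω : IsIntegralBasis F E 1 ω) (hπ : Irreducible π) {L : Submodule (OF F) E} {k : ℕ}
    (hL : mult F E L = ordSet F E π (k + 1)) :
    ∃ v ≠ 0, L = span (OF F) {v, v * (algebraMap (OF F) E π ^ (k + 1) * ω)} := by
  set p := algebraMap (OF F) E π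
  obtain ⟨v, hv, huv⟩ : ∃ v ∈ L, p ^ k * ω * v ∉ L := by
    have : p ^ k * ω ∉ mult F E L := by rw [hL, hω.pow_mul_mem_ordSet_iff hπ]; omega
    simpa [mult] using this
  have hpu : p * (p ^ k * ω) ∈ mult F E L := by
    rw [hL, ← mul_assoc, ← pow_succ']
    exact pow_mul_mem_ordSet hω.mem_integralClosure le_rfl
  have hpu2 : p * (p ^ k * ω) ^ 2 ∈ mult F E L := by
    rw [hL, show p * (p ^ k * ω) ^ 2 = p ^ (2 * k + 1) * ω ^ 2 by ring]
    exact pow_mul_mem_ordSet (pow_mem hω.mem_integralClosure 2) (by omega)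
  have hu (x : E) : ∃ s t : F, x = algebraMap F E s + algebraMap F E t * (p ^ k * ω) := by
    obtain ⟨s, t, rfl⟩ := hω.exists_eq x
    refine ⟨s, t / π ^ k, ?_⟩
    have := OF.algebraMap_ne_zero (E := E) hπ.ne_zero
    simp only [p, map_div₀, map_pow, OF.algebraMap_coe]
    field_simp
  refine ⟨v, ?_, (eq_span_pair_of_mul_notMem hπ hpu hpu2 hu hv huv).trans ?_⟩
  · rintro rfl
    simp at huv
  · rw [show algebraMap (OF F) E π * (p ^ k * ω) = p ^ (k + 1) * ω by ring]

def IsNeighbor (π : OF F) (L N : Submodule (OF F) E) : Prop :=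
  algebraMap F E π • (L : Set E) ⊂ N ∧ (N : Set E) ⊂ L

theorem IsNeighbor.le {L N : Submodule (OF F) E} (h : IsNeighbor π L N) : N ≤ L :=
  h.2.subset

theorem IsNeighbor.mul_mem {L N : Submodule (OF F) E} (h : IsNeighbor π L N) {x : E}
    (hx : x ∈ L) : algebraMap (OF F) E π * x ∈ N := by
  have := h.1.subset (Set.smul_mem_smul_set hx)
  rwa [smul_eq_mul, OF.algebraMap_coe] at this

theorem IsNeighbor.mul_mem_mult_right {L N : Submodule (OF F) E} (h : IsNeighbor π L N) {x : E}
    (hx : x ∈ mult F E L) : algebraMap (OF F) E π * x ∈ mult F E N := fun y hy => by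
  rw [mul_assoc]
  exact h.mul_mem (hx y (h.le hy))

theorem IsNeighbor.mul_mem_mult_left {L N : Submodule (OF F) E} (h : IsNeighbor π L N) {x : E}
    (hx : x ∈ mult F E N) : algebraMap (OF F) E π * x ∈ mult F E L := fun y hy => by
  rw [mul_comm _ x, mul_assoc]
  exact h.le (hx _ (h.mul_mem hy))

theorem isNeighbor_of_mult_ne (hπ : π ≠ 0) {L N : Submodule (OF F) E}
    (h₁ : ∀ x ∈ L, algebraMap (OF F) E π * x ∈ N) (h₂ : N ≤ L) (h : mult F E N ≠ mult F E L) :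
    IsNeighbor π L N := by
  have hsub : algebraMap F E π • (L : Set E) ⊆ N := Set.smul_set_subset_iff.2 fun x hx => by
    rw [smul_eq_mul, OF.algebraMap_coe]
    exact h₁ x hx
  refine ⟨hsub.ssubset_of_ne fun hN => h ?_, (SetLike.coe_subset_coe.2 h₂).ssubset_of_ne
    fun hN => h ?_⟩
  · exact mult_eq_of_homothetic ⟨π, by exact_mod_cast hπ, by rw [← hN, algebraMap_smul_set]⟩
  · exact mult_eq_of_homothetic ⟨1, one_ne_zero, by rw [hN, one_smul]⟩

theorem Adjacent.exists_isNeighbor {L L' : Submodule (OF F) E} (h : Adjacent F E π L L') :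
    ∃ N : Submodule (OF F) E, Homothetic F E N L' ∧ IsNeighbor π L N := by
  obtain ⟨-, M, M', ⟨c, hc, hM⟩, ⟨c', hc', hM'⟩, h₁, h₂⟩ := h
  refine ⟨c⁻¹ • M', ⟨c'⁻¹ * c, mul_ne_zero (inv_ne_zero hc') hc, ?_⟩, ?_, ?_⟩
  · rw [coe_pointwise_smul, mul_smul, smul_inv_smul₀ hc, hM', inv_smul_smul₀ hc']
  · rw [coe_pointwise_smul, ← Set.smul_set_ssubset_smul_set_iff₀ hc, smul_inv_smul₀ hc,
      smul_comm, ← hM]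
    exact h₁
  · rw [coe_pointwise_smul, ← Set.smul_set_ssubset_smul_set_iff₀ hc, smul_inv_smul₀ hc, ← hM]
    exact h₂

theorem IsNeighbor.dvd_of_smul_add_smul_mem [IsDiscreteValuationRing (OF F)] (hπ : Irreducible π)
    {L N : Submodule (OF F) E} (hN : IsNeighbor π L N) {v w θ : E}
    (hL : L = span (OF F) {v, w}) (hθ : θ ∈ mult F E N) (hθv : θ * v = w)
    (hθw : ∃ z ∈ L, θ * w = algebraMap (OF F) E π * z) {a b : OF F} (hab : a • v + b • w ∈ N) :
    π ∣ a := by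
  refine (hπ.isUnit_or_dvd a).resolve_left fun ha => ?_
  obtain ⟨z, hz, hθw⟩ := hθw
  have hw : w ∈ N := by
    rw [← N.algebraMap_mul_mem_iff ha]
    have : algebraMap (OF F) E a * w =
        θ * (a • v + b • w) - algebraMap (OF F) E b * (algebraMap (OF F) E π * z) := by
      simp only [Algebra.smul_def]
      linear_combination (-algebraMap (OF F) E a) * hθv - algebraMap (OF F) E b * hθw
    rw [this]
    exact N.sub_mem (hθ _ hab) (N.algebraMap_mul_mem b (hN.mul_mem hz))
  have hv : v ∈ N := by
    rw [← N.smul_mem_iff_of_isUnit ha]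
    simpa using N.sub_mem hab (N.smul_mem b hw)
  exact hN.2.2 (hL ▸ span_le.2 (Set.insert_subset_iff.2 ⟨hv, Set.singleton_subset_iff.2 hw⟩))

theorem IsNeighbor.eq_span_pair [IsDiscreteValuationRing (OF F)] (hπ : Irreducible π)
    {L N : Submodule (OF F) E} (hN : IsNeighbor π L N) {v w θ : E}
    (hL : L = span (OF F) {v, w}) (hθ : θ ∈ mult F E N) (hθv : θ * v = w)
    (hθw : ∃ z ∈ L, θ * w = algebraMap (OF F) E π * z) :
    N = span (OF F) {algebraMap (OF F) E π * v, w} := by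
  have hdvd {a b : OF F} (hab : a • v + b • w ∈ N) : π ∣ a :=
    hN.dvd_of_smul_add_smul_mem hπ hL hθ hθv hθw hab
  have hcoord {x : E} (hx : x ∈ N) : ∃ a b : OF F, a • v + b • w = x :=
    mem_span_pair.1 (hL ▸ hN.le hx)
  apply le_antisymm
  · intro x hx
    obtain ⟨a, b, rfl⟩ := hcoord hx
    obtain ⟨a, rfl⟩ := hdvd hx
    exact mem_span_pair.2 ⟨a, b, by simp only [Algebra.smul_def, map_mul]; ring⟩
  obtain ⟨x, hx, hxπL⟩ := Set.exists_of_ssubset hN.1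
  obtain ⟨a, b, rfl⟩ := hcoord hx
  obtain ⟨a, rfl⟩ := hdvd hx
  have hb : IsUnit b := (hπ.isUnit_or_dvd b).resolve_right fun ⟨b', hb'⟩ => hxπL
    ⟨a • v + b' • w, hL ▸ mem_span_pair.2 ⟨a, b', rfl⟩, by
      simp only [hb', smul_eq_mul, Algebra.smul_def, map_mul, OF.algebraMap_coe]; ring⟩
  have hpv : algebraMap (OF F) E π * v ∈ N := hN.mul_mem (hL ▸ subset_span (by simp))
  have hw : w ∈ N := by
    rw [← N.smul_mem_iff_of_isUnit hb]
    have : b • w = (π * a) • v + b • w - a • (algebraMap (OF F) E π * v) := by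
      simp only [Algebra.smul_def, map_mul]; ring
    rw [this]
    exact N.sub_mem hx (N.smul_mem a hpv)
  exact span_le.2 (Set.insert_subset_iff.2 ⟨hpv, Set.singleton_subset_iff.2 hw⟩)

theorem IsIntegralBasis.isNeighbor_span_pair {ω : E} (hω : IsIntegralBasis F E 1 ω)
    (hπ : Irreducible π) {c : E} (hc : c ≠ 0) (k : ℕ) :
    IsNeighbor π (span (OF F) {c, c * (algebraMap (OF F) E π ^ (k + 1) * ω)})
      (span (OF F) {algebraMap (OF F) E π * c,
        algebraMap (OF F) E π * c * (algebraMap (OF F) E π ^ k * ω)}) := by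
  set p := algebraMap (OF F) E π
  have hp : p ≠ 0 := OF.algebraMap_ne_zero hπ.ne_zero
  refine isNeighbor_of_mult_ne hπ.ne_zero (fun x hx => ?_) ?_ ?_
  · obtain ⟨a, b, rfl⟩ := mem_span_pair.1 hx
    exact mem_span_pair.2 ⟨a, b * π, by simp only [p, Algebra.smul_def, map_mul]; ring⟩
  · refine span_le.2 (Set.insert_subset_iff.2 ⟨mem_span_pair.2 ⟨π, 0, ?_⟩,
      Set.singleton_subset_iff.2 (mem_span_pair.2 ⟨0, 1, ?_⟩)⟩) <;>
    simp only [p, Algebra.smul_def, map_zero, map_one] <;> ring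
  · rw [hω.mult_span_pair (mul_ne_zero hp hc), hω.mult_span_pair hc]
    exact fun h => by simpa using hω.ordSet_injective hπ h

theorem IsIntegralBasis.eq_of_isNeighbor [IsDiscreteValuationRing (OF F)] {ω : E}
    (hω : IsIntegralBasis F E 1 ω) (hπ : Irreducible π) {c : E} {k : ℕ}
    {N : Submodule (OF F) E}
    (hN : IsNeighbor π (span (OF F) {c, c * (algebraMap (OF F) E π ^ (k + 1) * ω)}) N)
    (hθ : algebraMap (OF F) E π ^ (k + 1) * ω ∈ mult F E N) :
    N = span (OF F) {algebraMap (OF F) E π * c,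
      algebraMap (OF F) E π * c * (algebraMap (OF F) E π ^ k * ω)} := by
  set p := algebraMap (OF F) E π
  have hθw : ∃ z ∈ span (OF F) {c, c * (p ^ (k + 1) * ω)},
      p ^ (k + 1) * ω * (c * (p ^ (k + 1) * ω)) = p * z :=
    ⟨c * (p ^ (2 * k + 1) * ω ^ 2), hω.mem_span_pair_iff.2
      ⟨_, pow_mul_mem_ordSet (pow_mem hω.mem_integralClosure 2) (by omega), rfl⟩, by ring⟩
  rw [hN.eq_span_pair hπ rfl hθ (mul_comm _ _) hθw, show c * (p ^ (k + 1) * ω) =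
    p * c * (p ^ k * ω) by ring]

theorem IsIntegralBasis.eq_or_eq_of_isNeighbor [IsDiscreteValuationRing (OF F)] {ω : E}
    (hω : IsIntegralBasis F E 1 ω) (hπ : Irreducible π) {c : E} (hc : c ≠ 0) {k j : ℕ}
    {N : Submodule (OF F) E}
    (hN : IsNeighbor π (span (OF F) {c, c * (algebraMap (OF F) E π ^ (k + 1) * ω)}) N)
    (hNj : mult F E N = ordSet F E π j) : j = k ∨ j = k + 2 := by
  have hL := hω.mult_span_pair (π := π) (j := k + 1) hc
  have hω' := hω.mem_integralClosure
  have hj : j ≤ k + 2 := by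
    rw [← hω.pow_mul_mem_ordSet_iff hπ, ← hNj, pow_succ', mul_assoc]
    exact hN.mul_mem_mult_right (hL ▸ pow_mul_mem_ordSet hω' le_rfl)
  have hk : k ≤ j := by
    have := hN.mul_mem_mult_left (hNj ▸ pow_mul_mem_ordSet (π := π) (i := j) hω' le_rfl)
    rw [hL, ← mul_assoc, ← pow_succ', hω.pow_mul_mem_ordSet_iff hπ] at this
    omega
  have hne : j ≠ k + 1 := by
    rintro rfl
    rw [hω.eq_of_isNeighbor hπ hN (hNj ▸ pow_mul_mem_ordSet hω' le_rfl),
      hω.mult_span_pair (mul_ne_zero (OF.algebraMap_ne_zero hπ.ne_zero) hc)] at hNj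
    simpa using hω.ordSet_injective hπ hNj
  omega

end

theorem adjacent_classes_of_lattice_with_positive_conductor
    [IsDiscreteValuationRing (OF F)]
    (π : OF F) (hπ : Irreducible π)
    (hquad : Module.finrank F E = 2)
    (L : Submodule (OF F) E) (hL : IsLattice F E L)
    (m : ℕ) (hm : 1 ≤ m) (hLm : mult F E L = ordSet F E π m) :
    (∀ L' : Submodule (OF F) E, IsLattice F E L' → Adjacent F E π L L' →
        ∀ m' : ℕ, mult F E L' = ordSet F E π m' → m' = m - 1 ∨ m' = m + 1) ∧
    (∃ L' : Submodule (OF F) E, IsLattice F E L' ∧ Adjacent F E π L L' ∧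
        mult F E L' = ordSet F E π (m - 1) ∧
        ∀ L'' : Submodule (OF F) E, IsLattice F E L'' → Adjacent F E π L L'' →
          mult F E L'' = ordSet F E π (m - 1) → Homothetic F E L' L'') := by
  obtain ⟨k, rfl⟩ : ∃ k, m = k + 1 := ⟨m - 1, by omega⟩
  obtain ⟨ω, hω⟩ := exists_isIntegralBasis_one hπ hquad
    (fg_integralClosure_of_mult_eq hπ.ne_zero hL hLm)
  obtain ⟨v, hv, rfl⟩ := hω.exists_eq_span_pair hπ hLm
  have hp := OF.algebraMap_ne_zero (E := E) hπ.ne_zero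
  have hL₀ := hω.isNeighbor_span_pair hπ hv k
  have hmult₀ := hω.mult_span_pair (π := π) (j := k) (mul_ne_zero hp hv)
  refine ⟨fun L' _ hadj m' hm' => ?_, ⟨_, hL.of_mul_mem (Submodule.fg_span (Set.toFinite _)) hp
    fun _ => hL₀.mul_mem, ⟨fun h => ?_, _, _, ⟨1, one_ne_zero, (one_smul _ _).symm⟩,
    ⟨1, one_ne_zero, (one_smul _ _).symm⟩, hL₀⟩, hmult₀, fun L'' _ hadj hm'' => ?_⟩⟩
  · obtain ⟨N, hNL', hN⟩ := hadj.exists_isNeighbor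
    simpa using hω.eq_or_eq_of_isNeighbor hπ hv hN ((mult_eq_of_homothetic hNL').symm.trans hm')
  · rw [mult_eq_of_homothetic h, hLm] at hmult₀
    simpa using hω.ordSet_injective hπ hmult₀
  · obtain ⟨N, hNL'', hN⟩ := hadj.exists_isNeighbor
    rwa [← hω.eq_of_isNeighbor hπ hN]
    rw [← mult_eq_of_homothetic hNL'', hm'']
    exact pow_mul_mem_ordSet hω.mem_integralClosure (by omega)
end
end

section
/- Let X be a compact topological space and N an abelian group. The natural map LocallyConstant(X, ℤ) ⊗_ℤ N → LocallyConstant(X, N), sending f ⊗ n to the function x ↦ f(x)·n, is an isomorphism of abelian groups. -/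
/-!
A locally constant function on a compact space takes finitely many values, so it is the finite
combination `∑ᵥ 𝟙_{g⁻¹ v} • v` of the indicators of its clopen fibres; this gives surjectivity.
For injectivity, write an element as `∑ᵢ fᵢ ⊗ nᵢ` and let `g = (fᵢ)ᵢ`. Expanding each `fᵢ` over the
fibres of `g` rewrites the element as `∑ᵥ 𝟙_{g⁻¹ v} ⊗ mᵥ`, whose image takes the value `mᵥ` on the
nonempty fibre over `v`; so if the image vanishes, every `mᵥ` does.
-/

open scoped TensorProduct

variable (X : Type*) [TopologicalSpace X] (N : Type*) [AddCommGroup N]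

/-- The bilinear map `(f, n) ↦ (x ↦ f(x)·n)`. -/
noncomputable def smulLC : LocallyConstant X ℤ →ₗ[ℤ] N →ₗ[ℤ] LocallyConstant X N where
  toFun f :=
    { toFun := fun n => f.map fun k => k • n
      map_add' := fun n m => by
        ext x
        simp only [LocallyConstant.map_apply, Function.comp_apply, smul_add,
          LocallyConstant.coe_add, Pi.add_apply]
      map_smul' := fun k n => by
        ext x
        simp only [LocallyConstant.map_apply, Function.comp_apply, RingHom.id_apply,
          LocallyConstant.coe_smul, Pi.smul_apply]
        exact smul_comm _ _ _ }
  map_add' f g := by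
    ext n x
    simp only [LocallyConstant.map_apply, Function.comp_apply, LocallyConstant.coe_add,
      Pi.add_apply, add_smul, LinearMap.coe_mk, AddHom.coe_mk, LinearMap.add_apply]
  map_smul' k f := by
    ext n x
    simp only [LocallyConstant.map_apply, Function.comp_apply, RingHom.id_apply,
      LocallyConstant.coe_smul, Pi.smul_apply, LinearMap.coe_mk, AddHom.coe_mk,
      LinearMap.smul_apply, smul_assoc]

variable {X N}

theorem IsLocallyConstant.pi {ι : Type*} [Finite ι] {Y : ι → Type*} {f : ∀ i, X → Y i}
    (hf : ∀ i, IsLocallyConstant (f i)) : IsLocallyConstant fun x i => f i x := by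
  rw [IsLocallyConstant.iff_exists_open]
  intro x
  choose U hUo hxU hU using fun i => (hf i).exists_open x
  refine ⟨⋂ i, U i, isOpen_iInter_of_finite hUo, Set.mem_iInter.2 hxU, fun y hy => ?_⟩
  exact funext fun i => hU i y (Set.mem_iInter.1 hy i)

namespace LocallyConstant

variable {Y : Type*}

def pi {ι : Type*} [Finite ι] {Y : ι → Type*} (f : ∀ i, LocallyConstant X (Y i)) :
    LocallyConstant X (∀ i, Y i) :=
  ⟨fun x i => f i x, IsLocallyConstant.pi fun i => (f i).isLocallyConstant⟩

@[simp]
theorem sum_apply {ι : Type*} [AddCommMonoid Y] (s : Finset ι) (f : ι → LocallyConstant X Y)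
    (x : X) : (∑ i ∈ s, f i) x = ∑ i ∈ s, f i x :=
  map_sum (evalAddMonoidHom x) f s

section fiberIndicator

variable (R : Type*) [MulZeroOneClass R]

noncomputable def fiberIndicator (g : LocallyConstant X Y) (v : Y) : LocallyConstant X R :=
  charFn R (g.isLocallyConstant.isClopen_fiber v)

theorem fiberIndicator_apply_of_eq {g : LocallyConstant X Y} {v : Y} {x : X} (h : g x = v) :
    g.fiberIndicator R v x = 1 := by
  simp [fiberIndicator, coe_charFn, Set.indicator_of_mem (show x ∈ {x | g x = v} from h)]

theorem fiberIndicator_apply_of_ne {g : LocallyConstant X Y} {v : Y} {x : X} (h : g x ≠ v) :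
    g.fiberIndicator R v x = 0 := by
  simp [fiberIndicator, coe_charFn, Set.indicator_of_notMem (show x ∉ {x | g x = v} from h)]

end fiberIndicator

variable [CompactSpace X]

theorem sum_fiberIndicator_smul {R M : Type*} [Semiring R] [AddCommMonoid M] [Module R M]
    (g : LocallyConstant X Y) (w : Y → M) (x : X) :
    ∑ v ∈ g.range_finite.toFinset, g.fiberIndicator R v x • w v = w (g x) := by
  rw [Finset.sum_eq_single (g x)]
  · rw [fiberIndicator_apply_of_eq R rfl, one_smul]
  · intro v _ hv
    rw [fiberIndicator_apply_of_ne R (Ne.symm hv), zero_smul]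
  · exact fun h => (h (g.range_finite.mem_toFinset.2 (Set.mem_range_self x))).elim

theorem map_eq_sum_smul_fiberIndicator {R : Type*} [CommSemiring R] (g : LocallyConstant X Y)
    (w : Y → R) :
    g.map w = ∑ v ∈ g.range_finite.toFinset, w v • g.fiberIndicator R v := by
  ext x
  simp only [map_apply, Function.comp_apply, sum_apply, coe_smul, Pi.smul_apply, smul_eq_mul,
    mul_comm (w _)]
  exact (g.sum_fiberIndicator_smul (R := R) w x).symm

theorem sum_tmul_eq_sum_fiberIndicator_tmul {ι R M : Type*} [Fintype ι] [CommSemiring R]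
    [AddCommMonoid M] [Module R M] (f : ι → LocallyConstant X R) (m : ι → M) :
    ∑ i, f i ⊗ₜ[R] m i =
      ∑ v ∈ (pi f).range_finite.toFinset, (pi f).fiberIndicator R v ⊗ₜ[R] ∑ i, v i • m i := by
  have hf : ∀ i, f i = ∑ v ∈ (pi f).range_finite.toFinset, v i • (pi f).fiberIndicator R v :=
    fun i => (pi f).map_eq_sum_smul_fiberIndicator fun v => v i
  conv_lhs => rw [Finset.sum_congr rfl fun i _ => congrArg (· ⊗ₜ[R] m i) (hf i)]
  simp only [TensorProduct.sum_tmul, TensorProduct.tmul_sum, TensorProduct.smul_tmul]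
  exact Finset.sum_comm

end LocallyConstant

theorem lift_smulLC_tmul_apply (f : LocallyConstant X ℤ) (n : N) (x : X) :
    TensorProduct.lift (smulLC X N) (f ⊗ₜ[ℤ] n) x = f x • n := by
  simp [smulLC]

theorem lift_smulLC_sum_fiberIndicator_tmul_apply {Y : Type*} [CompactSpace X]
    (g : LocallyConstant X Y) (m : Y → N) (x : X) :
    TensorProduct.lift (smulLC X N)
      (∑ v ∈ g.range_finite.toFinset, g.fiberIndicator ℤ v ⊗ₜ[ℤ] m v) x = m (g x) := by
  simp only [map_sum, LocallyConstant.sum_apply, lift_smulLC_tmul_apply]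
  exact g.sum_fiberIndicator_smul m x

variable (X N)

theorem lift_smulLC_injective [CompactSpace X] :
    Function.Injective (TensorProduct.lift (smulLC X N)) := by
  rw [injective_iff_map_eq_zero]
  intro t ht
  obtain ⟨s, rfl⟩ := TensorProduct.exists_finset t
  rw [← Finset.sum_coe_sort s, LocallyConstant.sum_tmul_eq_sum_fiberIndicator_tmul] at ht ⊢
  refine Finset.sum_eq_zero fun v hv => ?_
  obtain ⟨x, rfl⟩ := (LocallyConstant.pi _).range_finite.mem_toFinset.1 hv
  have hx := LocallyConstant.congr_fun ht x
  rw [lift_smulLC_sum_fiberIndicator_tmul_apply] at hx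
  rw [hx, LocallyConstant.coe_zero, Pi.zero_apply, TensorProduct.tmul_zero]

theorem lift_smulLC_surjective [CompactSpace X] :
    Function.Surjective (TensorProduct.lift (smulLC X N)) :=
  fun h => ⟨∑ v ∈ h.range_finite.toFinset, h.fiberIndicator ℤ v ⊗ₜ[ℤ] v,
    LocallyConstant.ext fun x => lift_smulLC_sum_fiberIndicator_tmul_apply h id x⟩

/-- For `X` compact and `N` an abelian group, the natural map
`LocallyConstant(X, ℤ) ⊗_ℤ N → LocallyConstant(X, N)`, `f ⊗ n ↦ (x ↦ f(x)·n)`, is an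
isomorphism of abelian groups. -/
theorem locallyConstant_tensor_iso [CompactSpace X] :
    Function.Bijective (TensorProduct.lift (smulLC X N)) ∧
    ∀ (f : LocallyConstant X ℤ) (n : N) (x : X),
      TensorProduct.lift (smulLC X N) (f ⊗ₜ[ℤ] n) x = f x • n :=
  ⟨⟨lift_smulLC_injective X N, lift_smulLC_surjective X N⟩, lift_smulLC_tmul_apply⟩
end
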